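/- For every Lebesgue measurable function f : ℝⁿ → ℝ and every t ∈ ℝ, one has the inclusions {f^∨ < t} ⊂ {f < t}^(1) ⊂ {f^∨ ≤ t} and {f^∧ > t} ⊂ {f > t}^(1) ⊂ {f^∧ ≥ t}. -/

import Mathlib

/-!
Everything follows from two facts about densities: the density ratio is monotone in the set,
and for a measurable `A` the density ratio of `Aᶜ` is `1` minus that of `A`. For instance, if
`f^∨(x) < t`, some `s < t` has `x ∈ {f > s}^(0)`, hence `x ∈ {f ≤ s}^(1) ⊆ {f < t}^(1)`;
conversely `x ∈ {f < t}^(1)` gives `x ∈ {f ≥ t}^(0) ⊆ {f > t}^(0)`, so `f^∨(x) ≤ t`.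
-/

open MeasureTheory Metric Set Filter Topology ENNReal NNReal

noncomputable section

/-- The set of points where the measurable set `A` has `n`-dimensional density `t`. -/
def densityPt {X : Type*} [MetricSpace X] [MeasureSpace X] (A : Set X) (t : ℝ≥0∞) : Set X :=
  {x | Tendsto (fun ρ : ℝ => volume (A ∩ ball x ρ) / volume (ball x ρ)) (𝓝[>] 0) (𝓝 t)}

/-- The essential boundary `∂ᵉA = X \ (A^(0) ∪ A^(1))`. -/
def essBoundary {X : Type*} [MetricSpace X] [MeasureSpace X] (A : Set X) : Set X :=
  (densityPt A 0 ∪ densityPt A 1)ᶜ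

/-- Approximate lower limit `f^∧(x) = sup {t : x ∈ {f > t}^(1)}`. -/
def apLower {X : Type*} [MetricSpace X] [MeasureSpace X] (f : X → ℝ) (x : X) : EReal :=
  sSup {t : EReal | ∃ s : ℝ, t = (s : EReal) ∧ x ∈ densityPt {y | s < f y} 1}

/-- Approximate upper limit `f^∨(x) = inf {t : x ∈ {f > t}^(0)}`. -/
def apUpper {X : Type*} [MetricSpace X] [MeasureSpace X] (f : X → ℝ) (x : X) : EReal :=
  sInf {t : EReal | ∃ s : ℝ, t = (s : EReal) ∧ x ∈ densityPt {y | s < f y} 0}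

/-- `K` essentially disconnects `G`: there is a nontrivial Borel partition `{Gp, Gm}` of `G`
with `μH[d]((G^(1) ∩ ∂ᵉGp ∩ ∂ᵉGm) \ K) = 0`, where `d` is the codimension-one exponent. -/
def essentiallyDisconnects {X : Type*} [MetricSpace X] [MeasureSpace X] [BorelSpace X]
    (d : ℝ) (K G : Set X) : Prop :=
  ∃ Gp Gm : Set X, MeasurableSet Gp ∧ MeasurableSet Gm ∧
    volume (Gp ∩ Gm) = 0 ∧ volume (symmDiff G (Gp ∪ Gm)) = 0 ∧
    0 < volume Gp ∧ 0 < volume Gm ∧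
    μH[d] ((densityPt G 1 ∩ essBoundary Gp ∩ essBoundary Gm) \ K) = 0

section Density

variable {X : Type*} [MetricSpace X] [MeasureSpace X]

lemma densityPt_one_mono {A B : Set X} (h : A ⊆ B) : densityPt A 1 ⊆ densityPt B 1 := by
  intro x hx
  refine tendsto_of_tendsto_of_tendsto_of_le_of_le' hx tendsto_const_nhds ?_ ?_
  · filter_upwards with ρ
    exact ENNReal.div_le_div_right (measure_mono (inter_subset_inter_left _ h)) _
  · filter_upwards with ρ
    exact ENNReal.div_le_of_le_mul (by simpa using measure_mono inter_subset_right)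

lemma densityPt_zero_anti {A B : Set X} (h : A ⊆ B) : densityPt B 0 ⊆ densityPt A 0 := by
  intro x hx
  refine tendsto_of_tendsto_of_tendsto_of_le_of_le' tendsto_const_nhds hx ?_ ?_
  · filter_upwards with ρ
    exact zero_le
  · filter_upwards with ρ
    exact ENNReal.div_le_div_right (measure_mono (inter_subset_inter_left _ h)) _

variable [ProperSpace X] [IsFiniteMeasureOnCompacts (volume : Measure X)]
  [(volume : Measure X).IsOpenPosMeasure]

lemma volume_compl_inter_ball_div {A : Set X} (hA : MeasurableSet A) (x : X) {ρ : ℝ}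
    (hρ : 0 < ρ) :
    volume (Aᶜ ∩ ball x ρ) / volume (ball x ρ)
      = 1 - volume (A ∩ ball x ρ) / volume (ball x ρ) := by
  have hpos : volume (ball x ρ) ≠ 0 := (measure_ball_pos volume x hρ).ne'
  have hfin : volume (ball x ρ) ≠ ∞ := measure_ball_lt_top.ne
  have hcompl : volume (Aᶜ ∩ ball x ρ) = volume (ball x ρ) - volume (A ∩ ball x ρ) := by
    rw [← sdiff_eq_compl_inter, inter_comm]
    refine ENNReal.eq_sub_of_add_eq' hfin ?_
    rw [add_comm]
    exact measure_inter_add_sdiff _ hA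
  rw [hcompl, ENNReal.sub_div (fun _ _ => hpos), ENNReal.div_self hpos hfin]

lemma densityPt_subset_compl {A : Set X} (hA : MeasurableSet A) (t : ℝ≥0∞) :
    densityPt A t ⊆ densityPt Aᶜ (1 - t) := by
  intro x hx
  refine (((ENNReal.continuous_sub_left one_ne_top).tendsto t).comp hx).congr' ?_
  filter_upwards [self_mem_nhdsWithin] with ρ (hρ : 0 < ρ)
  exact (volume_compl_inter_ball_div hA x hρ).symm

lemma mem_densityPt_lt_of_apUpper_lt {f : X → ℝ} (hf : Measurable f) {x : X} {t : ℝ}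
    (hx : apUpper f x < t) : x ∈ densityPt {y | f y < t} 1 := by
  obtain ⟨_, ⟨s, rfl, hs⟩, hst⟩ := sInf_lt_iff.mp hx
  have hcompl : x ∈ densityPt {y | s < f y}ᶜ 1 := by
    simpa using densityPt_subset_compl (measurableSet_lt measurable_const hf) 0 hs
  exact densityPt_one_mono
    (fun y (hy : ¬s < f y) => (not_lt.mp hy).trans_lt (EReal.coe_lt_coe_iff.mp hst)) hcompl

lemma apUpper_le_of_mem_densityPt_lt {f : X → ℝ} (hf : Measurable f) {x : X} {t : ℝ}
    (hx : x ∈ densityPt {y | f y < t} 1) : apUpper f x ≤ t := by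
  have hcompl : x ∈ densityPt {y | f y < t}ᶜ 0 := by
    simpa using densityPt_subset_compl (measurableSet_lt hf measurable_const) 1 hx
  have hgt : x ∈ densityPt {y | t < f y} 0 :=
    densityPt_zero_anti (fun y (hy : t < f y) => not_lt.mpr hy.le) hcompl
  exact sInf_le ⟨t, rfl, hgt⟩

end Density

variable {X : Type*} [MetricSpace X] [MeasureSpace X]

lemma mem_densityPt_gt_of_lt_apLower {f : X → ℝ} {x : X} {t : ℝ} (hx : t < apLower f x) :
    x ∈ densityPt {y | t < f y} 1 := by
  obtain ⟨_, ⟨s, rfl, hs⟩, hts⟩ := lt_sSup_iff.mp hx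
  exact densityPt_one_mono (fun y (hy : s < f y) => (EReal.coe_lt_coe_iff.mp hts).trans hy) hs

lemma le_apLower_of_mem_densityPt_gt {f : X → ℝ} {x : X} {t : ℝ}
    (hx : x ∈ densityPt {y | t < f y} 1) : t ≤ apLower f x :=
  le_sSup ⟨t, rfl, hx⟩

/-- For every Lebesgue measurable `f : ℝⁿ → ℝ` and every `t ∈ ℝ`, one has
`{f^∨ < t} ⊆ {f < t}^(1) ⊆ {f^∨ ≤ t}` and `{f^∧ > t} ⊆ {f > t}^(1) ⊆ {f^∧ ≥ t}`. -/
theorem statement13 (n : ℕ) (f : EuclideanSpace ℝ (Fin n) → ℝ) (hf : Measurable f) (t : ℝ) :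
    {x | apUpper f x < (t : EReal)} ⊆ densityPt {y | f y < t} 1 ∧
    densityPt {y | f y < t} 1 ⊆ {x | apUpper f x ≤ (t : EReal)} ∧
    {x | (t : EReal) < apLower f x} ⊆ densityPt {y | t < f y} 1 ∧
    densityPt {y | t < f y} 1 ⊆ {x | (t : EReal) ≤ apLower f x} :=
  ⟨fun _ => mem_densityPt_lt_of_apUpper_lt hf, fun _ => apUpper_le_of_mem_densityPt_lt hf,
    fun _ => mem_densityPt_gt_of_lt_apLower, fun _ => le_apLower_of_mem_densityPt_gt⟩
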